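/- Adaptive Bernstein inequality: Let X_1, X_2, ... be independent random variables with 0 ≤ X_i ≤ 1 almost surely, S_n = Σ_{i=1}^n (X_i − E X_i), v_m = Σ_{i=1}^m Var(X_i), u_n = 2 ln(log₂(n) + 1) + ln(4/δ), and ε_n = (u_n + √(u_n² + 18 v_{2n} u_n))/(3n). Then P(∃ n ≥ 1 : S_n / n ≥ ε_n) ≤ δ/2. -/

import Mathlib

/-!
Peeling over dyadic blocks. For `2ᵏ ≤ n < 2ᵏ⁺¹` the level `n εₙ` dominates the level `T_k`
solving `T² / (2 (v_{2ᵏ⁺¹} + T / 3)) = u_{2ᵏ}`, so the bad event is covered by the events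
`{∃ m ≤ 2ᵏ⁺¹, S_m ≥ T_k}`. For independent centred summands `exp (l S_m)` is a nonnegative
submartingale, and Doob's maximal inequality bounds such an event by the Chernoff bound
`exp (-l T) ∏ᵢ E exp (l (Xᵢ - E Xᵢ))`. Bennett's estimate
`E exp (l (X - E X)) ≤ exp (Var X (eˡ - l - 1))`, together with
`eˡ - l - 1 ≤ l² / (2 (1 - l / 3))` at `l = T / (v + T / 3)`, turns this into
`exp (-u_{2ᵏ}) = δ / (4 (k + 1)²)`; finally `∑ 1 / (k + 1)² = π² / 6 ≤ 2`.
-/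

open MeasureTheory ProbabilityTheory Real Finset
open scoped Nat

lemma Nat.two_mul_three_pow_le_factorial (n : ℕ) : 2 * 3 ^ n ≤ (n + 2)! := by
  induction n with
  | zero => simp [Nat.factorial]
  | succ n ih =>
    rw [Nat.factorial_succ, pow_succ]
    nlinarith

namespace Real

lemma exp_sub_sub_one_eq_tsum (x : ℝ) : exp x - x - 1 = ∑' n : ℕ, x ^ (n + 2) / (n + 2)! := by
  rw [exp_eq_exp_ℝ, NormedSpace.exp_eq_tsum_div]
  beta_reduce
  rw [← (summable_pow_div_factorial x).sum_add_tsum_nat_add 2]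
  simp [sum_range_succ]
  ring

lemma summable_pow_add_two_div_factorial (x : ℝ) :
    Summable fun n : ℕ => x ^ (n + 2) / (n + 2)! :=
  (summable_nat_add_iff 2).2 (summable_pow_div_factorial x)

lemma exp_mul_le_one_add_mul_add_sq_mul {l y : ℝ} (hl : 0 ≤ l) (hy : |y| ≤ 1) :
    exp (l * y) ≤ 1 + l * y + y ^ 2 * (exp l - l - 1) := by
  have hterm (n : ℕ) : (l * y) ^ (n + 2) / (n + 2)! ≤ y ^ 2 * (l ^ (n + 2) / (n + 2)!) := by
    have hy2 : y ^ (n + 2) ≤ y ^ 2 := calc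
      y ^ (n + 2) ≤ |y| ^ (n + 2) := (le_abs_self _).trans (abs_pow y _).le
      _ ≤ |y| ^ 2 := pow_le_pow_of_le_one (abs_nonneg y) hy (by omega)
      _ = y ^ 2 := sq_abs y
    rw [mul_pow, mul_comm (l ^ _), mul_div_assoc]
    exact mul_le_mul_of_nonneg_right hy2 (by positivity)
  have := (exp_sub_sub_one_eq_tsum (l * y)).le.trans <|
    (summable_pow_add_two_div_factorial _).tsum_le_tsum hterm
      ((summable_pow_add_two_div_factorial l).mul_left _)
  rw [tsum_mul_left, ← exp_sub_sub_one_eq_tsum] at this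
  linarith

lemma exp_sub_sub_one_le {l : ℝ} (h0 : 0 ≤ l) (h3 : l < 3) :
    exp l - l - 1 ≤ l ^ 2 / (2 * (1 - l / 3)) := by
  have hterm (n : ℕ) : l ^ (n + 2) / (n + 2)! ≤ l ^ 2 / 2 * (l / 3) ^ n := by
    calc l ^ (n + 2) / ((n + 2)! : ℝ) ≤ l ^ (n + 2) / (2 * 3 ^ n) :=
          div_le_div_of_nonneg_left (by positivity) (by positivity)
            (by exact_mod_cast Nat.two_mul_three_pow_le_factorial n)
      _ = l ^ 2 / 2 * (l / 3) ^ n := by rw [div_pow, pow_add]; field_simp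
  have hgeom : HasSum (fun n : ℕ => (l / 3) ^ n) (1 - l / 3)⁻¹ :=
    hasSum_geometric_of_lt_one (by positivity) (by linarith)
  calc exp l - l - 1 ≤ ∑' n : ℕ, l ^ 2 / 2 * (l / 3) ^ n := by
        rw [exp_sub_sub_one_eq_tsum]
        exact (summable_pow_add_two_div_factorial l).tsum_le_tsum hterm
          (hgeom.summable.mul_left _)
    _ = l ^ 2 / (2 * (1 - l / 3)) := by
        rw [tsum_mul_left, hgeom.tsum_eq]
        field_simp

lemma neg_mul_add_mul_exp_sub_sub_one_le {V T : ℝ} (hV : 0 ≤ V) (hT : 0 < T) :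
    -(T / (V + T / 3) * T) + V * (exp (T / (V + T / 3)) - T / (V + T / 3) - 1)
      ≤ -(T ^ 2 / (2 * (V + T / 3))) := by
  set D := V + T / 3
  have hD : 0 < D := by positivity
  have hφ : V * (exp (T / D) - T / D - 1) ≤ T ^ 2 / (2 * D) := by
    rcases hV.eq_or_lt with rfl | hV
    · simp only [zero_mul]; positivity
    have hl3 : T / D < 3 := by rw [div_lt_iff₀ hD, show D = V + T / 3 from rfl]; linarith
    calc V * (exp (T / D) - T / D - 1) ≤ V * ((T / D) ^ 2 / (2 * (1 - T / D / 3))) :=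
          mul_le_mul_of_nonneg_left (exp_sub_sub_one_le (by positivity) hl3) hV.le
      _ = T ^ 2 / (2 * D) := by
          have : 1 - T / D / 3 = V / D := by field_simp; ring
          rw [this]; field_simp
  have : T / D * T = 2 * (T ^ 2 / (2 * D)) := by field_simp
  linarith

end Real

/-- The level `T` at which the Bernstein bound `exp (-T² / (2 (V + T / 3)))` equals `exp (-U)`. -/
noncomputable def bernsteinThreshold (U V : ℝ) : ℝ := (U + √(U ^ 2 + 18 * V * U)) / 3

lemma bernsteinThreshold_pos {U V : ℝ} (hU : 0 < U) (hV : 0 ≤ V) :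
    0 < bernsteinThreshold U V := by
  unfold bernsteinThreshold
  positivity

lemma bernsteinThreshold_mono {U U' V V' : ℝ} (hU : 0 ≤ U) (hV : 0 ≤ V) (hUU' : U ≤ U')
    (hVV' : V ≤ V') : bernsteinThreshold U V ≤ bernsteinThreshold U' V' := by
  unfold bernsteinThreshold
  have hVU : V * U ≤ V' * U' := mul_le_mul hVV' hUU' hU (hV.trans hVV')
  gcongr
  nlinarith

lemma sq_div_bernsteinThreshold {U V : ℝ} (hU : 0 < U) (hV : 0 ≤ V) :
    bernsteinThreshold U V ^ 2 / (2 * (V + bernsteinThreshold U V / 3)) = U := by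
  have hs := sq_sqrt (show 0 ≤ U ^ 2 + 18 * V * U by positivity)
  have hT := bernsteinThreshold_pos hU hV
  rw [div_eq_iff (by positivity)]
  unfold bernsteinThreshold at *
  nlinarith

namespace ProbabilityTheory

variable {Ω : Type*} {mΩ : MeasurableSpace Ω} {μ : Measure Ω}

section MGF

variable [IsProbabilityMeasure μ]

lemma one_le_mgf_of_integral_eq_zero {Y : Ω → ℝ} {l : ℝ} (hY : Integrable Y μ)
    (hexp : Integrable (fun ω => exp (l * Y ω)) μ) (hmean : μ[Y] = 0) : 1 ≤ mgf Y μ l := by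
  have hlin_int : Integrable (fun ω => 1 + l * Y ω) μ :=
    (integrable_const 1).add (hY.const_mul l)
  calc (1 : ℝ) = ∫ ω, (1 + l * Y ω) ∂μ := by
        rw [integral_add (integrable_const 1) (hY.const_mul l), integral_const_mul, hmean]
        simp
    _ ≤ mgf Y μ l :=
        integral_mono hlin_int hexp fun ω => by linarith [add_one_le_exp (l * Y ω)]

lemma mgf_le_one_add_integral_sq_mul {Y : Ω → ℝ} (hY : AEMeasurable Y μ)
    (hbd : ∀ᵐ ω ∂μ, |Y ω| ≤ 1) (hmean : μ[Y] = 0) {l : ℝ} (hl : 0 ≤ l) :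
    mgf Y μ l ≤ 1 + (∫ ω, Y ω ^ 2 ∂μ) * (exp l - l - 1) := by
  have hY_int : Integrable Y μ := .of_bound hY.aestronglyMeasurable 1 (by simpa using hbd)
  have hY2_int : Integrable (fun ω => Y ω ^ 2) μ :=
    .of_bound (hY.pow_const 2).aestronglyMeasurable 1 <| by
      filter_upwards [hbd] with ω hω
      simpa [abs_le] using hω
  have hexp_int : Integrable (fun ω => exp (l * Y ω)) μ :=
    integrable_exp_mul_of_le l 1 hl hY (hbd.mono fun _ hω => (le_abs_self _).trans hω)
  have hlin_int : Integrable (fun ω => 1 + l * Y ω) μ :=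
    (integrable_const 1).add (hY_int.const_mul l)
  calc mgf Y μ l ≤ ∫ ω, (1 + l * Y ω + Y ω ^ 2 * (exp l - l - 1)) ∂μ :=
        integral_mono_ae hexp_int (hlin_int.add (hY2_int.mul_const _))
          (hbd.mono fun _ hω => exp_mul_le_one_add_mul_add_sq_mul hl hω)
    _ = 1 + (∫ ω, Y ω ^ 2 ∂μ) * (exp l - l - 1) := by
        rw [integral_add hlin_int (hY2_int.mul_const _),
          integral_add (integrable_const 1) (hY_int.const_mul l), integral_const_mul,
          integral_mul_const, hmean]
        simp

lemma integral_sub_integral_eq_zero {X : Ω → ℝ} (hX : Integrable X μ) :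
    μ[fun ω => X ω - μ[X]] = 0 := by
  rw [integral_sub hX (integrable_const _)]
  simp

lemma abs_sub_integral_le_one {X : Ω → ℝ} (hX : AEMeasurable X μ)
    (hbd : ∀ᵐ ω ∂μ, X ω ∈ Set.Icc (0 : ℝ) 1) : ∀ᵐ ω ∂μ, |X ω - μ[X]| ≤ 1 := by
  have hX_int : Integrable X μ := .of_mem_Icc 0 1 hX hbd
  have h0 : 0 ≤ μ[X] := integral_nonneg_of_ae (hbd.mono fun _ hω => hω.1)
  have h1 : μ[X] ≤ 1 := by
    simpa using integral_mono_ae hX_int (integrable_const 1) (hbd.mono fun _ hω => hω.2)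
  filter_upwards [hbd] with ω hω
  exact abs_le.2 ⟨by linarith [hω.1], by linarith [hω.2]⟩

lemma mgf_sub_integral_le_exp_variance_mul {X : Ω → ℝ} (hX : AEMeasurable X μ)
    (hbd : ∀ᵐ ω ∂μ, X ω ∈ Set.Icc (0 : ℝ) 1) {l : ℝ} (hl : 0 ≤ l) :
    mgf (fun ω => X ω - μ[X]) μ l ≤ exp (Var[X; μ] * (exp l - l - 1)) :=
  calc mgf (fun ω => X ω - μ[X]) μ l ≤ 1 + Var[X; μ] * (exp l - l - 1) := by
        rw [variance_eq_integral hX]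
        exact mgf_le_one_add_integral_sq_mul (hX.sub_const _) (abs_sub_integral_le_one hX hbd)
          (integral_sub_integral_eq_zero (.of_mem_Icc 0 1 hX hbd)) hl
    _ ≤ exp (Var[X; μ] * (exp l - l - 1)) := by
        linarith [add_one_le_exp (Var[X; μ] * (exp l - l - 1))]

end MGF

section Maximal

def precedingFiltration (Y : ℕ → Ω → ℝ) (hY : ∀ i, Measurable (Y i)) : Filtration ℕ mΩ where
  seq m := ⨆ j ∈ Set.Iio m, MeasurableSpace.comap (Y j) inferInstance
  mono' _ _ hmn := biSup_mono fun _ hj => lt_of_lt_of_le hj hmn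
  le' _ := iSup₂_le fun j _ => (hY j).comap_le

variable {Y : ℕ → Ω → ℝ}

lemma measurable_precedingFiltration {hY : ∀ i, Measurable (Y i)} {j m : ℕ} (hjm : j < m) :
    Measurable[precedingFiltration Y hY m] (Y j) :=
  Measurable.of_comap_le (le_iSup₂ (f := fun j (_ : j ∈ Set.Iio m) =>
    MeasurableSpace.comap (Y j) inferInstance) j hjm)

lemma stronglyMeasurable_sum_precedingFiltration {hY : ∀ i, Measurable (Y i)} (m : ℕ) :
    StronglyMeasurable[precedingFiltration Y hY m] fun ω => ∑ j ∈ range m, Y j ω :=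
  (Finset.measurable_sum _ fun _ hj =>
    measurable_precedingFiltration (mem_range.1 hj)).stronglyMeasurable

lemma iIndepFun.indep_comap_precedingFiltration {hY : ∀ i, Measurable (Y i)}
    (h : iIndepFun Y μ) (m : ℕ) :
    Indep (MeasurableSpace.comap (Y m) inferInstance) (precedingFiltration Y hY m) μ := by
  have := indep_iSup_of_disjoint (fun i => (hY i).comap_le) ((iIndepFun_iff_iIndep _ _ _).1 h)
    (S := {m}) (T := Set.Iio m) (by simp)
  simp only [Set.mem_singleton_iff, iSup_iSup_eq_left] at this
  exact this

variable [IsProbabilityMeasure μ]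

lemma iIndepFun.integrable_exp_mul_sum_range (h : iIndepFun Y μ) (hY : ∀ i, Measurable (Y i))
    {l : ℝ} (hint : ∀ i, Integrable (fun ω => exp (l * Y i ω)) μ) (m : ℕ) :
    Integrable (fun ω => exp (l * ∑ j ∈ range m, Y j ω)) μ := by
  simpa [Finset.sum_apply] using h.integrable_exp_mul_sum hY (s := range m) fun i _ => hint i

lemma iIndepFun.submartingale_exp_mul_sum (h : iIndepFun Y μ) (hY : ∀ i, Measurable (Y i))
    {l : ℝ} (hint : ∀ i, Integrable (fun ω => exp (l * Y i ω)) μ)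
    (hmgf : ∀ i, 1 ≤ mgf (Y i) μ l) :
    Submartingale (fun m ω => exp (l * ∑ j ∈ range m, Y j ω))
      (precedingFiltration Y hY) μ := by
  set f : ℕ → Ω → ℝ := fun m ω => exp (l * ∑ j ∈ range m, Y j ω)
  have hadapted : StronglyAdapted (precedingFiltration Y hY) f := fun m =>
    ((stronglyMeasurable_sum_precedingFiltration m).measurable.const_mul l).exp.stronglyMeasurable
  have hf_int := h.integrable_exp_mul_sum_range hY hint
  refine submartingale_nat hadapted hf_int fun m => ?_
  have hsplit : f (m + 1) = f m * fun ω => exp (l * Y m ω) := by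
    funext ω
    simp [f, sum_range_succ, mul_add, exp_add]
  have hpull := condExp_mul_of_stronglyMeasurable_left (hadapted m)
    (hsplit ▸ hf_int (m + 1)) (hint m)
  have hindep := condExp_indep_eq (hY m).comap_le ((precedingFiltration Y hY).le m)
    ((comap_measurable (Y m)).const_mul l).exp.stronglyMeasurable
    (h.indep_comap_precedingFiltration m)
  rw [hsplit]
  filter_upwards [hpull, hindep] with ω hω₁ hω₂
  rw [hω₁, Pi.mul_apply, hω₂]
  exact le_mul_of_one_le_right (exp_pos _).le (hmgf m)

/-- Doob's maximal inequality for the submartingale `exp (l Sₘ)`. -/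
lemma iIndepFun.measureReal_exists_sum_ge_le (h : iIndepFun Y μ) (hY : ∀ i, Measurable (Y i))
    {l : ℝ} (hl : 0 ≤ l) (hint : ∀ i, Integrable (fun ω => exp (l * Y i ω)) μ)
    (hmgf : ∀ i, 1 ≤ mgf (Y i) μ l) (t : ℝ) (N : ℕ) :
    μ.real {ω | ∃ m ≤ N, t ≤ ∑ j ∈ range m, Y j ω}
      ≤ exp (-(l * t)) * ∏ i ∈ range N, mgf (Y i) μ l := by
  set f : ℕ → Ω → ℝ := fun m ω => exp (l * ∑ j ∈ range m, Y j ω)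
  set ε : NNReal := ⟨exp (l * t), (exp_pos _).le⟩
  set E := {ω | (ε : ℝ) ≤ (range (N + 1)).sup' nonempty_range_add_one fun k => f k ω}
  have hdoob := maximal_ineq (h.submartingale_exp_mul_sum hY hint hmgf)
    (fun m ω => (exp_pos _).le) (ε := ε) N
  have hsub : {ω | ∃ m ≤ N, t ≤ ∑ j ∈ range m, Y j ω} ⊆ E := by
    rintro ω ⟨m, hmN, hm⟩
    exact le_sup'_of_le (fun k => f k ω) (mem_range.2 (Nat.lt_succ_of_le hmN))
      (exp_le_exp.2 (mul_le_mul_of_nonneg_left hm hl))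
  have hf_nonneg : ∀ᵐ ω ∂μ, 0 ≤ f N ω := ae_of_all _ fun ω => (exp_pos _).le
  have hE : exp (l * t) * μ.real E ≤ ∏ i ∈ range N, mgf (Y i) μ l :=
    calc exp (l * t) * μ.real E = (ε * μ E).toReal := by
          rw [ENNReal.toReal_mul, ENNReal.coe_toReal, measureReal_def]
          rfl
      _ ≤ ∫ ω in E, f N ω ∂μ :=
          ENNReal.toReal_le_of_le_ofReal (setIntegral_nonneg_of_ae hf_nonneg) hdoob
      _ ≤ ∫ ω, f N ω ∂μ :=
          setIntegral_le_integral (h.integrable_exp_mul_sum_range hY hint N) hf_nonneg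
      _ = ∏ i ∈ range N, mgf (Y i) μ l := by
          rw [← h.mgf_sum hY]
          simp [f, mgf, Finset.sum_apply]
  rw [exp_neg, ← div_eq_inv_mul, le_div_iff₀' (exp_pos _)]
  exact (mul_le_mul_of_nonneg_left (measureReal_mono hsub) (exp_pos _).le).trans hE

/-- Maximal Bernstein inequality, from the Chernoff bound at `l = T / (V + T / 3)`. -/
theorem iIndepFun.measureReal_exists_sum_sub_integral_ge_le {X : ℕ → Ω → ℝ}
    (h : iIndepFun X μ) (hX : ∀ i, Measurable (X i))
    (hbd : ∀ i, ∀ᵐ ω ∂μ, X i ω ∈ Set.Icc (0 : ℝ) 1) {T : ℝ} (hT : 0 < T) (N : ℕ) :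
    μ.real {ω | ∃ m ≤ N, T ≤ ∑ i ∈ range m, (X i ω - μ[X i])}
      ≤ exp (-(T ^ 2 / (2 * (∑ i ∈ range N, Var[X i; μ] + T / 3)))) := by
  set V := ∑ i ∈ range N, Var[X i; μ]
  have hV : 0 ≤ V := sum_nonneg fun i _ => variance_nonneg _ _
  set l := T / (V + T / 3)
  have hl : 0 ≤ l := by positivity
  set Y : ℕ → Ω → ℝ := fun i ω => X i ω - μ[X i]
  have hY : ∀ i, Measurable (Y i) := fun i => (hX i).sub_const _
  have hY_indep : iIndepFun Y μ :=
    h.comp (fun i (x : ℝ) => x - ∫ ω, X i ω ∂μ) fun _ => measurable_sub_const _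
  have hX_int : ∀ i, Integrable (X i) μ := fun i => .of_mem_Icc 0 1 (hX i).aemeasurable (hbd i)
  have hexp_int : ∀ i, Integrable (fun ω => exp (l * Y i ω)) μ := fun i =>
    integrable_exp_mul_of_le l 1 hl (hY i).aemeasurable
      ((abs_sub_integral_le_one (hX i).aemeasurable (hbd i)).mono fun _ hω =>
        (le_abs_self _).trans hω)
  have hmgf_ge : ∀ i, 1 ≤ mgf (Y i) μ l := fun i =>
    one_le_mgf_of_integral_eq_zero ((hX_int i).sub (integrable_const _)) (hexp_int i)
      (integral_sub_integral_eq_zero (hX_int i))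
  have hmgf_le : ∏ i ∈ range N, mgf (Y i) μ l ≤ exp (V * (exp l - l - 1)) :=
    calc ∏ i ∈ range N, mgf (Y i) μ l
        ≤ ∏ i ∈ range N, exp (Var[X i; μ] * (exp l - l - 1)) :=
          prod_le_prod (fun i _ => mgf_nonneg) fun i _ =>
            mgf_sub_integral_le_exp_variance_mul (hX i).aemeasurable (hbd i) hl
      _ = exp (V * (exp l - l - 1)) := by rw [← exp_sum, sum_mul]
  calc _ ≤ exp (-(l * T)) * ∏ i ∈ range N, mgf (Y i) μ l :=
        hY_indep.measureReal_exists_sum_ge_le hY hl hexp_int hmgf_ge T N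
    _ ≤ exp (-(l * T)) * exp (V * (exp l - l - 1)) := by gcongr
    _ = exp (-(l * T) + V * (exp l - l - 1)) := (exp_add _ _).symm
    _ ≤ _ := exp_le_exp.2 (neg_mul_add_mul_exp_sub_sub_one_le hV hT)

theorem iIndepFun.measure_exists_sum_sub_integral_ge_bernsteinThreshold_le {X : ℕ → Ω → ℝ}
    (h : iIndepFun X μ) (hX : ∀ i, Measurable (X i))
    (hbd : ∀ i, ∀ᵐ ω ∂μ, X i ω ∈ Set.Icc (0 : ℝ) 1) {U : ℝ} (hU : 0 < U) (N : ℕ) :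
    μ {ω | ∃ m ≤ N, bernsteinThreshold U (∑ i ∈ range N, Var[X i; μ])
      ≤ ∑ i ∈ range m, (X i ω - μ[X i])} ≤ ENNReal.ofReal (exp (-U)) := by
  have hV : 0 ≤ ∑ i ∈ range N, Var[X i; μ] := sum_nonneg fun i _ => variance_nonneg _ _
  rw [← ofReal_measureReal]
  convert ENNReal.ofReal_le_ofReal <|
    h.measureReal_exists_sum_sub_integral_ge_le hX hbd (bernsteinThreshold_pos hU hV) N using 4
  exact (sq_div_bernsteinThreshold hU hV).symm

end Maximal

end ProbabilityTheory

lemma exists_dyadic_bernsteinThreshold_le {u v : ℕ → ℝ} (hu : Monotone u) (hu0 : ∀ n, 0 ≤ u n)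
    (hv : Monotone v) (hv0 : ∀ n, 0 ≤ v n) {n : ℕ} (hn : 1 ≤ n) :
    ∃ k, n ≤ 2 ^ (k + 1) ∧
      bernsteinThreshold (u (2 ^ k)) (v (2 ^ (k + 1))) ≤ bernsteinThreshold (u n) (v (2 * n)) := by
  have hlow := Nat.pow_log_le_self 2 (Nat.one_le_iff_ne_zero.1 hn)
  have hhigh := Nat.lt_pow_succ_log_self one_lt_two n
  exact ⟨Nat.log 2 n, hhigh.le,
    bernsteinThreshold_mono (hu0 _) (hv0 _) (hu hlow) (hv (by rw [pow_succ]; omega))⟩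

lemma tsum_ofReal_div_add_one_sq_le {c : ℝ} (hc : 0 ≤ c) :
    ∑' k : ℕ, ENNReal.ofReal (c / ((k : ℝ) + 1) ^ 2) ≤ ENNReal.ofReal (2 * c) := by
  have hzeta : HasSum (fun k : ℕ => c / ((k : ℝ) + 1) ^ 2) (c * (π ^ 2 / 6)) := by
    have := (hasSum_nat_add_iff' 1).2 hasSum_zeta_two
    simp only [range_one, sum_singleton, Nat.cast_add, Nat.cast_one, CharP.cast_eq_zero] at this
    simpa [div_eq_mul_one_div c] using this.mul_left c
  rw [← ENNReal.ofReal_tsum_of_nonneg (fun k => by positivity) hzeta.summable, hzeta.tsum_eq]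
  have hπ : π ^ 2 / 6 ≤ 2 := by nlinarith [pi_lt_d2, pi_pos]
  exact ENNReal.ofReal_le_ofReal (by nlinarith)

lemma logb_two_natCast_two_pow (k : ℕ) : logb 2 ((2 ^ k : ℕ) : ℝ) = k := by
  rw [Nat.cast_pow, Nat.cast_ofNat, logb_pow, logb_self_eq_one one_lt_two, mul_one]

lemma logb_two_natCast_nonneg (n : ℕ) : 0 ≤ logb 2 n :=
  div_nonneg (log_natCast_nonneg n) (log_nonneg one_le_two)

lemma monotone_log_logb_two_natCast_add_one : Monotone fun n : ℕ => log (logb 2 n + 1) := by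
  intro m n hmn
  have hm := logb_two_natCast_nonneg m
  have hlogb : logb 2 m ≤ logb 2 n := by
    rcases m.eq_zero_or_pos with rfl | hm_pos
    · simpa using logb_two_natCast_nonneg n
    · gcongr
      exact one_lt_two
  dsimp only
  gcongr

lemma two_mul_log_logb_two_natCast_add_one_add_log_four_div_pos {δ : ℝ} (hδ0 : 0 < δ)
    (hδ4 : δ < 4) (n : ℕ) : 0 < 2 * log (logb 2 n + 1) + log (4 / δ) := by
  have := log_pos (show 1 < 4 / δ by rw [lt_div_iff₀ hδ0]; linarith)
  have := log_nonneg (le_add_of_nonneg_left (logb_two_natCast_nonneg n))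
  linarith

lemma exp_neg_two_mul_log_add_log_four_div {δ : ℝ} (hδ : 0 < δ) (k : ℕ) :
    exp (-(2 * log ((k : ℝ) + 1) + log (4 / δ))) = δ / 4 / ((k : ℝ) + 1) ^ 2 := by
  rw [← log_rpow (by positivity), ← log_mul (by positivity) (by positivity),
    exp_neg, exp_log (by positivity)]
  norm_cast
  field_simp

theorem adaptive_bernstein_inequality
    {Ω : Type*} [MeasureSpace Ω] [IsProbabilityMeasure (ℙ : Measure Ω)]
    (X : ℕ → Ω → ℝ)
    (hmeas : ∀ i, Measurable (X i))
    (hindep : iIndepFun X ℙ)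
    (hbound : ∀ i, ∀ᵐ ω, X i ω ∈ Set.Icc (0 : ℝ) 1)
    (δ : ℝ) (hδ : δ ∈ Set.Ioo (0 : ℝ) 1)
    (u : ℕ → ℝ) (hu : ∀ n, u n = 2 * log (logb 2 n + 1) + log (4 / δ))
    (v : ℕ → ℝ) (hv : ∀ m, v m = ∑ i ∈ Finset.range m, variance (X i) ℙ)
    (ε : ℕ → ℝ)
    (hε : ∀ n, ε n = (u n + Real.sqrt ((u n) ^ 2 + 18 * v (2 * n) * u n)) / (3 * n)) :
    ℙ {ω | ∃ n : ℕ, 1 ≤ n ∧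
            ε n ≤ (∑ i ∈ Finset.range n, (X i ω - ∫ ω', X i ω' ∂ℙ)) / n}
      ≤ ENNReal.ofReal (δ / 2) := by
  obtain ⟨hδ0, hδ1⟩ := hδ
  have hu_pos (n : ℕ) : 0 < u n :=
    hu n ▸ two_mul_log_logb_two_natCast_add_one_add_log_four_div_pos hδ0 (by linarith) n
  have hu_mono : Monotone u := fun m n hmn => by
    linarith [hu m, hu n, monotone_log_logb_two_natCast_add_one hmn]
  have hv_mono : Monotone v := fun m n hmn => by
    simpa only [hv] using sum_le_sum_of_subset_of_nonneg (range_subset_range.2 hmn)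
      fun i _ _ => variance_nonneg (X i) ℙ
  have hv_nonneg (m : ℕ) : 0 ≤ v m := hv m ▸ sum_nonneg fun i _ => variance_nonneg _ _
  set B : ℕ → Set Ω := fun k => {ω | ∃ m ≤ 2 ^ (k + 1),
    bernsteinThreshold (u (2 ^ k)) (v (2 ^ (k + 1))) ≤ ∑ i ∈ range m, (X i ω - ∫ ω', X i ω' ∂ℙ)}
  have hcover : {ω | ∃ n : ℕ, 1 ≤ n ∧
      ε n ≤ (∑ i ∈ range n, (X i ω - ∫ ω', X i ω' ∂ℙ)) / n} ⊆ ⋃ k, B k := by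
    rintro ω ⟨n, hn, hω⟩
    obtain ⟨k, hnk, hk⟩ := exists_dyadic_bernsteinThreshold_le hu_mono (fun n => (hu_pos n).le)
      hv_mono hv_nonneg hn
    have hεn : bernsteinThreshold (u n) (v (2 * n)) = n * ε n := by
      rw [hε, bernsteinThreshold]
      field_simp
    exact Set.mem_iUnion.2 ⟨k, n, hnk, hk.trans <|
      hεn ▸ (le_div_iff₀' (by exact_mod_cast hn)).1 hω⟩
  have hB (k : ℕ) : ℙ (B k) ≤ ENNReal.ofReal (δ / 4 / ((k : ℝ) + 1) ^ 2) := by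
    calc ℙ (B k) ≤ ENNReal.ofReal (exp (-u (2 ^ k))) := by
          simpa only [← hv] using hindep.measure_exists_sum_sub_integral_ge_bernsteinThreshold_le
            hmeas hbound (hu_pos (2 ^ k)) (2 ^ (k + 1))
      _ = _ := by rw [hu, logb_two_natCast_two_pow, exp_neg_two_mul_log_add_log_four_div hδ0]
  calc _ ≤ ∑' k, ℙ (B k) := (measure_mono hcover).trans (measure_iUnion_le B)
    _ ≤ ∑' k : ℕ, ENNReal.ofReal (δ / 4 / ((k : ℝ) + 1) ^ 2) := ENNReal.tsum_le_tsum hB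
    _ ≤ ENNReal.ofReal (2 * (δ / 4)) := tsum_ofReal_div_add_one_sq_le (by positivity)
    _ = ENNReal.ofReal (δ / 2) := by ring_nf
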